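/- arXiv:1809.03403 — 4 statements merged into one kernel-verified Lean document; each statement's English description precedes it below -/
import Mathlib

section
/- The normalized robustness of coherence is continuous: for D-dimensional density matrices ρ and τ with ‖ρ − τ‖₁ < δ where δ = ((D−1)/D)·ε, we have |C_R(ρ) − C_R(τ)| < ε. -/
open scoped ComplexOrder

/-- A `D`-dimensional density matrix: positive semidefinite with unit trace. -/
def IsDensity {D : ℕ} (ρ : Matrix (Fin D) (Fin D) ℂ) : Prop :=
  ρ.PosSemidef ∧ ρ.trace = 1

/-- An incoherent state: a diagonal density matrix (w.r.t. the fixed basis). -/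
def IsIncoherent {D : ℕ} (σ : Matrix (Fin D) (Fin D) ℂ) : Prop :=
  IsDensity σ ∧ ∃ d : Fin D → ℝ, σ = Matrix.diagonal fun i => (d i : ℂ)

/-- The normalized robustness of coherence
`C_R(ρ) = (1/(D−1))·inf{s ≥ 0 : ∃ incoherent σ, ρ ≤ (1+s)σ}`. -/
noncomputable def CR {D : ℕ} (ρ : Matrix (Fin D) (Fin D) ℂ) : ℝ :=
  (1 / ((D : ℝ) - 1)) *
    sInf {s : ℝ | 0 ≤ s ∧ ∃ σ, IsIncoherent σ ∧ ((1 + s : ℂ) • σ - ρ).PosSemidef}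

/-!
Write `Δ = ρ - τ` and `t = ‖Δ‖₁`. Every eigenvalue of `Δ` has modulus at most `t`, so
`-t • 1 ≤ Δ ≤ t • 1`. If `τ ≤ (1 + s) σ` with `σ` incoherent, then
`ρ ≤ (1 + s) σ + t • 1 = (1 + s + t D) σ'`, where `σ'` mixes `σ` with the maximally mixed state
`1 / D` and is again incoherent. Hence the robustness of `ρ` exceeds that of `τ` by at most `t D`,
and symmetrically, so `|C_R ρ - C_R τ| ≤ t D / (D - 1) < δ D / (D - 1) = ε`.
-/

open scoped MatrixOrder
open Matrix

namespace Matrix.IsHermitian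

variable {n 𝕜 : Type*} [Fintype n] [DecidableEq n] [RCLike 𝕜] {A : Matrix n n 𝕜}

lemma le_smul_one_of_eigenvalues_le (hA : A.IsHermitian) {c : ℝ}
    (h : ∀ i, hA.eigenvalues i ≤ c) : A ≤ (c : 𝕜) • 1 := by
  have hspec : ∀ x ∈ spectrum ℝ A, x ≤ c := by
    rw [hA.spectrum_real_eq_range_eigenvalues]
    rintro _ ⟨i, rfl⟩
    exact h i
  simpa [Algebra.algebraMap_eq_smul_one] using le_algebraMap_of_spectrum_le hspec hA.isSelfAdjoint

lemma neg_smul_one_le_of_le_eigenvalues (hA : A.IsHermitian) {c : ℝ}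
    (h : ∀ i, -c ≤ hA.eigenvalues i) : -((c : 𝕜) • 1) ≤ A := by
  have hspec : ∀ x ∈ spectrum ℝ A, -c ≤ x := by
    rw [hA.spectrum_real_eq_range_eigenvalues]
    rintro _ ⟨i, rfl⟩
    exact h i
  simpa [Algebra.algebraMap_eq_smul_one] using algebraMap_le_of_le_spectrum hspec hA.isSelfAdjoint

end Matrix.IsHermitian

section

variable {D : ℕ}

lemma IsDensity.card_pos {ρ : Matrix (Fin D) (Fin D) ℂ} (hρ : IsDensity ρ) : 0 < D := by
  refine Nat.pos_of_ne_zero ?_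
  rintro rfl
  simpa [Matrix.trace] using hρ.2

lemma IsDensity.eigenvalues_le_one {ρ : Matrix (Fin D) (Fin D) ℂ} (hρ : IsDensity ρ) (i : Fin D) :
    hρ.1.1.eigenvalues i ≤ 1 := by
  have hsum : ∑ j, hρ.1.1.eigenvalues j = 1 := by
    have h : ((∑ j, hρ.1.1.eigenvalues j : ℝ) : ℂ) = 1 := by
      rw [Complex.ofReal_sum]
      exact hρ.1.1.trace_eq_sum_eigenvalues.symm.trans hρ.2
    exact_mod_cast h
  rw [← hsum]
  exact Finset.single_le_sum (fun j _ => hρ.1.eigenvalues_nonneg j) (Finset.mem_univ i)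

lemma IsDensity.le_one {ρ : Matrix (Fin D) (Fin D) ℂ} (hρ : IsDensity ρ) : ρ ≤ 1 := by
  simpa using hρ.1.1.le_smul_one_of_eigenvalues_le hρ.eigenvalues_le_one

lemma IsIncoherent.real_smul_add_smul {σ σ' : Matrix (Fin D) (Fin D) ℂ} (hσ : IsIncoherent σ)
    (hσ' : IsIncoherent σ') {a b : ℝ} (ha : 0 ≤ a) (hb : 0 ≤ b) (hab : a + b = 1) :
    IsIncoherent ((a : ℂ) • σ + (b : ℂ) • σ') := by
  obtain ⟨⟨hσpsd, hσtr⟩, d, rfl⟩ := hσ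
  obtain ⟨⟨hσ'psd, hσ'tr⟩, d', rfl⟩ := hσ'
  refine ⟨⟨(hσpsd.smul (by exact_mod_cast ha)).add (hσ'psd.smul (by exact_mod_cast hb)), ?_⟩,
    fun i => a * d i + b * d' i, ?_⟩
  · rw [trace_add, trace_smul, trace_smul, hσtr, hσ'tr]
    simp only [smul_eq_mul, mul_one]
    exact_mod_cast hab
  · ext i j
    rcases eq_or_ne i j with rfl | hij <;> simp [*]

noncomputable def maximallyMixed (D : ℕ) : Matrix (Fin D) (Fin D) ℂ := ((D : ℂ)⁻¹) • 1

lemma isIncoherent_maximallyMixed (hD : 0 < D) : IsIncoherent (maximallyMixed D) := by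
  refine ⟨⟨PosSemidef.one.smul (by positivity), ?_⟩, fun _ => (D : ℝ)⁻¹, ?_⟩
  · simp [maximallyMixed, trace_smul, hD.ne']
  · ext i j
    rcases eq_or_ne i j with rfl | hij <;> simp [maximallyMixed, *]

lemma card_smul_maximallyMixed (hD : 0 < D) : (D : ℂ) • maximallyMixed D = 1 := by
  simp [maximallyMixed, smul_smul, hD.ne']

def robustnessSet (ρ : Matrix (Fin D) (Fin D) ℂ) : Set ℝ :=
  {s : ℝ | 0 ≤ s ∧ ∃ σ, IsIncoherent σ ∧ ((1 + s : ℂ) • σ - ρ).PosSemidef}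

lemma CR_eq (ρ : Matrix (Fin D) (Fin D) ℂ) : CR ρ = 1 / ((D : ℝ) - 1) * sInf (robustnessSet ρ) :=
  rfl

lemma bddBelow_robustnessSet (ρ : Matrix (Fin D) (Fin D) ℂ) : BddBelow (robustnessSet ρ) :=
  ⟨0, fun _ hs => hs.1⟩

lemma IsDensity.card_sub_one_mem_robustnessSet {ρ : Matrix (Fin D) (Fin D) ℂ} (hρ : IsDensity ρ) :
    (D : ℝ) - 1 ∈ robustnessSet ρ := by
  have hD := hρ.card_pos
  refine ⟨sub_nonneg.2 (Nat.one_le_cast.2 hD), maximallyMixed D,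
    isIncoherent_maximallyMixed hD, ?_⟩
  rw [← le_iff, show (1 + (((D : ℝ) - 1 : ℝ) : ℂ)) = D by push_cast; ring,
    card_smul_maximallyMixed hD]
  exact hρ.le_one

lemma add_mul_card_mem_robustnessSet {ρ τ : Matrix (Fin D) (Fin D) ℂ} {s t : ℝ}
    (hs : s ∈ robustnessSet τ) (ht : 0 ≤ t) (hρτ : ρ ≤ τ + (t : ℂ) • 1) :
    s + t * D ∈ robustnessSet ρ := by
  obtain ⟨hs0, σ, hσ, hτσ⟩ := hs
  have hD := hσ.1.card_pos
  have hr : 0 < 1 + s + t * D := by positivity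
  set σ' := (((1 + s) / (1 + s + t * D) : ℝ) : ℂ) • σ
    + ((t * D / (1 + s + t * D) : ℝ) : ℂ) • maximallyMixed D
  have hσ' : IsIncoherent σ' :=
    hσ.real_smul_add_smul (isIncoherent_maximallyMixed hD) (by positivity) (by positivity)
      (by field_simp)
  have hscale : (1 + ((s + t * D : ℝ) : ℂ)) • σ' = (1 + (s : ℂ)) • σ + (t : ℂ) • 1 := by
    rw [smul_add, smul_smul, smul_smul, ← card_smul_maximallyMixed hD, smul_smul]
    congr 2 <;> push_cast <;> field_simp <;> ring
  refine ⟨by positivity, σ', hσ', ?_⟩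
  rw [← le_iff, hscale]
  calc ρ ≤ τ + (t : ℂ) • 1 := hρτ
    _ ≤ (1 + (s : ℂ)) • σ + (t : ℂ) • 1 := add_le_add_left hτσ _

lemma sInf_robustnessSet_le_add {ρ τ : Matrix (Fin D) (Fin D) ℂ} (hτ : IsDensity τ) {t : ℝ}
    (ht : 0 ≤ t) (hρτ : ρ ≤ τ + (t : ℂ) • 1) :
    sInf (robustnessSet ρ) ≤ sInf (robustnessSet τ) + t * D := by
  have h := le_csInf ⟨_, hτ.card_sub_one_mem_robustnessSet⟩ fun s hs =>
    sub_le_iff_le_add.2 (csInf_le (bddBelow_robustnessSet ρ)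
      (add_mul_card_mem_robustnessSet hs ht hρτ))
  linarith

lemma abs_CR_sub_le {ρ τ : Matrix (Fin D) (Fin D) ℂ} (hρ : IsDensity ρ) (hτ : IsDensity τ)
    {t : ℝ} (ht : 0 ≤ t) (hρτ : ρ ≤ τ + (t : ℂ) • 1) (hτρ : τ ≤ ρ + (t : ℂ) • 1) :
    |CR ρ - CR τ| ≤ t * D / ((D : ℝ) - 1) := by
  have hD : (1 : ℝ) ≤ D := Nat.one_le_cast.2 hρ.card_pos
  have habs : |sInf (robustnessSet ρ) - sInf (robustnessSet τ)| ≤ t * D :=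
    abs_sub_le_iff.2 ⟨by linarith [sInf_robustnessSet_le_add hτ ht hρτ],
      by linarith [sInf_robustnessSet_le_add hρ ht hτρ]⟩
  rw [CR_eq, CR_eq, ← mul_sub, abs_mul, abs_of_nonneg (by simpa using hD), one_div_mul_eq_div]
  exact div_le_div_of_nonneg_right habs (by linarith)

end

theorem robustness_of_coherence_continuous_general {D : ℕ} (hD : 2 ≤ D)
    (ρ τ : Matrix (Fin D) (Fin D) ℂ) (hρ : IsDensity ρ) (hτ : IsDensity τ)
    (ε δ : ℝ) (hδ : δ = (((D : ℝ) - 1) / D) * ε)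
    (htr : (∑ i, |(hρ.1.1.sub hτ.1.1).eigenvalues i|) < δ) :
    |CR ρ - CR τ| < ε := by
  set hΔ := hρ.1.1.sub hτ.1.1
  set t := ∑ i, |hΔ.eigenvalues i|
  have heig : ∀ i, |hΔ.eigenvalues i| ≤ t := fun i =>
    Finset.single_le_sum (f := fun j => |hΔ.eigenvalues j|) (fun j _ => abs_nonneg _)
      (Finset.mem_univ i)
  have hρτ : ρ ≤ τ + (t : ℂ) • 1 :=
    sub_le_iff_le_add'.1 (hΔ.le_smul_one_of_eigenvalues_le fun i => (abs_le.1 (heig i)).2)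
  have hτρ : τ ≤ ρ + (t : ℂ) • 1 :=
    neg_le_sub_iff_le_add.1 (hΔ.neg_smul_one_le_of_le_eigenvalues fun i => (abs_le.1 (heig i)).1)
  have hD1 : (0 : ℝ) < D - 1 := by
    have : (2 : ℝ) ≤ D := by exact_mod_cast hD
    linarith
  calc |CR ρ - CR τ| ≤ t * D / ((D : ℝ) - 1) :=
        abs_CR_sub_le hρ hτ (Finset.sum_nonneg fun i _ => abs_nonneg _) hρτ hτρ
    _ < δ * D / ((D : ℝ) - 1) := by gcongr
    _ = ε := by rw [hδ]; field_simp

/-- The normalized robustness of coherence is continuous: for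
`D`-dimensional density matrices `ρ` and `τ` with `‖ρ − τ‖₁ < δ` (trace norm,
i.e. sum of absolute values of eigenvalues) where `δ = ((D−1)/D)·ε`, we have
`|C_R(ρ) − C_R(τ)| < ε`. -/
theorem robustness_of_coherence_continuous {D : ℕ} (hD : 2 ≤ D)
    (ρ τ : Matrix (Fin D) (Fin D) ℂ) (hρ : IsDensity ρ) (hτ : IsDensity τ)
    (ε δ : ℝ) (hε : 0 < ε) (hδ : δ = (((D : ℝ) - 1) / D) * ε)
    (htr : (∑ i, |(hρ.1.1.sub hτ.1.1).eigenvalues i|) < δ) :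
    |CR ρ - CR τ| < ε :=
  robustness_of_coherence_continuous_general hD ρ τ hρ hτ ε δ hδ htr
end

section
/- Let ρ be a density matrix, s* ≥ 0, σ* an incoherent (diagonal) state with ρ ≤ (1+s*)σ*, and τ a density matrix with τ − ρ ≤ δ·𝟙 for some δ ≥ 0. Then τ ≤ ((1+s*) + δD)·σ' where σ' = ((1+s*)σ* + δ𝟙)/((1+s*)+δD) is a normalized incoherent state. Consequently the robustness of coherence satisfies C_R(τ) ≤ C_R(ρ) + δD/(D−1) whenever C_R(ρ) = s*/(D−1). -/
open scoped ComplexOrder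

theorem isIncoherent_inv_trace_smul {D : ℕ} {M : Matrix (Fin D) (Fin D) ℂ} (hM : M.PosSemidef)
    (htr : M.trace ≠ 0) (hdiag : ∃ d : Fin D → ℝ, M = Matrix.diagonal fun i => (d i : ℂ)) :
    IsIncoherent (M.trace⁻¹ • M) := by
  obtain ⟨d, rfl⟩ := hdiag
  refine ⟨⟨hM.smul (inv_nonneg_of_nonneg hM.trace_nonneg), ?_⟩, ?_⟩
  · rw [Matrix.trace_smul, smul_eq_mul, inv_mul_cancel₀ htr]
  · have hre : (Matrix.diagonal fun i => (d i : ℂ)).trace = ((∑ i, d i : ℝ) : ℂ) := by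
      simp [Matrix.trace_diagonal]
    refine ⟨fun i => (∑ j, d j)⁻¹ * d i, ?_⟩
    rw [hre, ← Matrix.diagonal_smul]
    congr 1 with i
    simp

namespace IsIncoherent

variable {D : ℕ} {σ : Matrix (Fin D) (Fin D) ℂ}

theorem posSemidef_smul_add_smul_one (hσ : IsIncoherent σ) {a b : ℝ} (ha : 0 ≤ a) (hb : 0 ≤ b) :
    ((a : ℂ) • σ + (b : ℂ) • (1 : Matrix (Fin D) (Fin D) ℂ)).PosSemidef :=
  (hσ.1.1.smul (by exact_mod_cast ha)).add (Matrix.PosSemidef.one.smul (by exact_mod_cast hb))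

theorem trace_smul_add_smul_one (hσ : IsIncoherent σ) (a b : ℂ) :
    (a • σ + b • (1 : Matrix (Fin D) (Fin D) ℂ)).trace = a + b * D := by
  simp [Matrix.trace_add, Matrix.trace_smul, hσ.1.2]

theorem exists_diagonal_smul_add_smul_one (hσ : IsIncoherent σ) (a b : ℝ) :
    ∃ d : Fin D → ℝ, (a : ℂ) • σ + (b : ℂ) • (1 : Matrix (Fin D) (Fin D) ℂ) =
      Matrix.diagonal fun i => (d i : ℂ) := by
  obtain ⟨d, rfl⟩ := hσ.2
  refine ⟨fun i => a * d i + b, ?_⟩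
  rw [← Matrix.diagonal_one, ← Matrix.diagonal_smul, ← Matrix.diagonal_smul, Matrix.diagonal_add]
  simp

end IsIncoherent

theorem CR_le_of_posSemidef_smul_sub {D : ℕ} (hD : 1 ≤ D) {τ σ : Matrix (Fin D) (Fin D) ℂ}
    {s : ℝ} (hs : 0 ≤ s) (hσ : IsIncoherent σ) (h : ((1 + s : ℂ) • σ - τ).PosSemidef) :
    CR τ ≤ s / ((D : ℝ) - 1) := by
  have hD' : (0 : ℝ) ≤ D - 1 := sub_nonneg.2 (by exact_mod_cast hD)
  rw [div_eq_inv_mul, ← one_div]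
  exact mul_le_mul_of_nonneg_left (csInf_le ⟨0, fun _ h => h.1⟩ ⟨hs, σ, hσ, h⟩)
    (one_div_nonneg.2 hD')

theorem robustness_perturbation_bound_general {D : ℕ} (hD : 2 ≤ D)
    (ρ τ σstar : Matrix (Fin D) (Fin D) ℂ)
    (hσ : IsIncoherent σstar)
    (sstar : ℝ) (hs : 0 ≤ sstar)
    (hle : ((1 + sstar : ℂ) • σstar - ρ).PosSemidef)
    (δ : ℝ) (hδ : 0 ≤ δ)
    (hτρ : ((δ : ℂ) • (1 : Matrix (Fin D) (Fin D) ℂ) - (τ - ρ)).PosSemidef)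
    (hCρ : CR ρ = sstar / ((D : ℝ) - 1)) :
    IsIncoherent ((((1 + sstar) + δ * D : ℂ))⁻¹ •
        ((1 + sstar : ℂ) • σstar + (δ : ℂ) • (1 : Matrix (Fin D) (Fin D) ℂ))) ∧
    (((1 + sstar : ℂ) • σstar + (δ : ℂ) • (1 : Matrix (Fin D) (Fin D) ℂ)) - τ).PosSemidef ∧
    CR τ ≤ CR ρ + δ * D / ((D : ℝ) - 1) := by
  set M := (1 + sstar : ℂ) • σstar + (δ : ℂ) • (1 : Matrix (Fin D) (Fin D) ℂ)
  have htr : M.trace = (1 + sstar) + δ * D := hσ.trace_smul_add_smul_one _ _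
  have htr_ne : M.trace ≠ 0 := by
    rw [htr]; exact_mod_cast (by positivity : (0 : ℝ) < 1 + sstar + δ * D).ne'
  have hM : M.PosSemidef := by
    simpa only [Complex.ofReal_add, Complex.ofReal_one] using
      hσ.posSemidef_smul_add_smul_one (a := 1 + sstar) (by positivity) hδ
  have hnormal : IsIncoherent (M.trace⁻¹ • M) := by
    refine isIncoherent_inv_trace_smul hM htr_ne ?_
    simpa only [Complex.ofReal_add, Complex.ofReal_one] using
      hσ.exists_diagonal_smul_add_smul_one (1 + sstar) δ
  have hdom : (M - τ).PosSemidef := by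
    have : M - τ = ((1 + sstar : ℂ) • σstar - ρ) + ((δ : ℂ) • 1 - (τ - ρ)) := by
      simp only [M]; abel
    exact this ▸ hle.add hτρ
  refine ⟨htr ▸ hnormal, hdom, ?_⟩
  have hscale : (1 + (sstar + δ * D : ℝ) : ℂ) • (M.trace⁻¹ • M) = M := by
    rw [smul_smul, show (1 + (sstar + δ * D : ℝ) : ℂ) = M.trace by rw [htr]; push_cast; ring,
      mul_inv_cancel₀ htr_ne, one_smul]
  calc CR τ ≤ (sstar + δ * D) / ((D : ℝ) - 1) :=
        CR_le_of_posSemidef_smul_sub (by omega) (by positivity) hnormal (by rwa [hscale])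
    _ = CR ρ + δ * D / ((D : ℝ) - 1) := by rw [hCρ, add_div]

/-- Let `ρ` be a density matrix, `s* ≥ 0`, `σ*` an incoherent state
with `ρ ≤ (1+s*)σ*`, and `τ` a density matrix with `τ − ρ ≤ δ·𝟙` for some `δ ≥ 0`.
Then `τ ≤ ((1+s*) + δD)·σ'` where `σ' = ((1+s*)σ* + δ𝟙)/((1+s*)+δD)` is a
normalized incoherent state; consequently `C_R(τ) ≤ C_R(ρ) + δD/(D−1)` whenever
`C_R(ρ) = s*/(D−1)`. -/
theorem robustness_perturbation_bound {D : ℕ} (hD : 2 ≤ D)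
    (ρ τ σstar : Matrix (Fin D) (Fin D) ℂ)
    (hρ : IsDensity ρ) (hτ : IsDensity τ) (hσ : IsIncoherent σstar)
    (sstar : ℝ) (hs : 0 ≤ sstar)
    (hle : ((1 + sstar : ℂ) • σstar - ρ).PosSemidef)
    (δ : ℝ) (hδ : 0 ≤ δ)
    (hτρ : ((δ : ℂ) • (1 : Matrix (Fin D) (Fin D) ℂ) - (τ - ρ)).PosSemidef)
    (hCρ : CR ρ = sstar / ((D : ℝ) - 1)) :
    IsIncoherent ((((1 + sstar) + δ * D : ℂ))⁻¹ •
        ((1 + sstar : ℂ) • σstar + (δ : ℂ) • (1 : Matrix (Fin D) (Fin D) ℂ))) ∧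
    (((1 + sstar : ℂ) • σstar + (δ : ℂ) • (1 : Matrix (Fin D) (Fin D) ℂ)) - τ).PosSemidef ∧
    CR τ ≤ CR ρ + δ * D / ((D : ℝ) - 1) :=
  robustness_perturbation_bound_general hD ρ τ σstar hσ sstar hs hle δ hδ hτρ hCρ
end

section
/- For a single-qubit state ρ = (1/2)(𝟙 + v_x σ_x + v_y σ_y + v_z σ_z), the robustness of coherence with respect to the computational basis equals C(ρ) = √(v_x² + v_y²) = |ρ_{01}| + |ρ_{10}|, i.e., it equals the l₁-norm of the off-diagonal elements. -/
open scoped ComplexOrder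
open Complex

/-- The Pauli matrix `σ_x`. -/
def pauliX : Matrix (Fin 2) (Fin 2) ℂ := !![0, 1; 1, 0]

/-- The Pauli matrix `σ_y`. -/
def pauliY : Matrix (Fin 2) (Fin 2) ℂ := !![0, -I; I, 0]

/-- The Pauli matrix `σ_z`. -/
def pauliZ : Matrix (Fin 2) (Fin 2) ℂ := !![1, 0; 0, -1]

/-- The normalized robustness of coherence of a qubit state with respect to the
computational basis (for `D = 2` the normalization factor is `1/(2−1) = 1`):
`C(ρ) = inf{s ≥ 0 : ∃ diagonal state σ, ρ ≤ (1+s)σ}`. -/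
noncomputable def CRqubit (ρ : Matrix (Fin 2) (Fin 2) ℂ) : ℝ :=
  sInf {s : ℝ | 0 ≤ s ∧ ∃ d : Fin 2 → ℝ, (∀ i, 0 ≤ d i) ∧ (∑ i, d i) = 1 ∧
    ((1 + s : ℂ) • Matrix.diagonal (fun i => (d i : ℂ)) - ρ).PosSemidef}

/-!
A Hermitian `2 × 2` matrix is positive semidefinite iff its trace and determinant are
nonnegative. For `ρ = !![p, c; c̄, q]` and `(1 + s) σ - ρ` with `σ` diagonal of trace one, the
trace is `s` and the determinant is `a b - ‖c‖²`, where `a + b = s`; AM-GM forces `s ≥ 2‖c‖`,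
with equality for `σ = diag(p + ‖c‖, q + ‖c‖) / (1 + 2‖c‖)`, which makes the determinant vanish.
-/

namespace Matrix

variable {𝕜 : Type*} [RCLike 𝕜]

theorem posSemidef_fin_two_iff {A : Matrix (Fin 2) (Fin 2) 𝕜} :
    A.PosSemidef ↔ A.IsHermitian ∧ 0 ≤ A.trace ∧ 0 ≤ A.det := by
  refine ⟨fun h => ⟨h.isHermitian, h.trace_nonneg, h.det_nonneg⟩, ?_⟩
  rintro ⟨hA, htr, hdet⟩
  rw [hA.posSemidef_iff_eigenvalues_nonneg]
  rw [hA.trace_eq_sum_eigenvalues, Fin.sum_univ_two] at htr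
  rw [hA.det_eq_prod_eigenvalues, Fin.prod_univ_two] at hdet
  norm_cast at htr hdet
  intro i
  fin_cases i <;> simp <;> nlinarith

theorem posSemidef_fin_two_of_iff (a b : ℝ) (c : 𝕜) :
    (!![(a : 𝕜), c; star c, (b : 𝕜)]).PosSemidef ↔ 0 ≤ a + b ∧ ‖c‖ ^ 2 ≤ a * b := by
  have hA : (!![(a : 𝕜), c; star c, (b : 𝕜)]).IsHermitian := by
    ext i j; fin_cases i <;> fin_cases j <;> simp
  have hdet : (!![(a : 𝕜), c; star c, (b : 𝕜)]).det = ((a * b - ‖c‖ ^ 2 : ℝ) : 𝕜) := by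
    rw [det_fin_two_of, RCLike.star_def, RCLike.mul_conj]; push_cast; ring
  rw [posSemidef_fin_two_iff, trace_fin_two_of, hdet, ← RCLike.ofReal_add, RCLike.ofReal_nonneg,
    RCLike.ofReal_nonneg, sub_nonneg]
  exact and_iff_right hA

end Matrix

theorem smul_diagonal_sub_fin_two_of (t p q : ℝ) (d : Fin 2 → ℝ) (c : ℂ) :
    (t : ℂ) • Matrix.diagonal (fun i => (d i : ℂ)) - !![(p : ℂ), c; star c, (q : ℂ)] =
      !![((t * d 0 - p : ℝ) : ℂ), -c; star (-c), ((t * d 1 - q : ℝ) : ℂ)] := by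
  ext i j; fin_cases i <;> fin_cases j <;> simp

theorem CRqubit_fin_two_of (p q : ℝ) (c : ℂ) (hpq : p + q = 1) (hp : 0 ≤ p + ‖c‖)
    (hq : 0 ≤ q + ‖c‖) : CRqubit !![(p : ℂ), c; star c, (q : ℂ)] = 2 * ‖c‖ := by
  have hcast (s : ℝ) : (1 + s : ℂ) = ((1 + s : ℝ) : ℂ) := by push_cast; ring
  refine IsLeast.csInf_eq ⟨?_, ?_⟩
  · have hpos : 0 < 1 + 2 * ‖c‖ := by positivity
    have hshift (x : ℝ) : (1 + 2 * ‖c‖) * ((x + ‖c‖) / (1 + 2 * ‖c‖)) - x = ‖c‖ := by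
      field_simp; ring
    refine ⟨by positivity, ![(p + ‖c‖) / (1 + 2 * ‖c‖), (q + ‖c‖) / (1 + 2 * ‖c‖)], ?_, ?_, ?_⟩
    · intro i; fin_cases i <;> simp <;> positivity
    · simp only [Fin.sum_univ_two, Matrix.cons_val_one, Matrix.cons_val_zero]
      rw [← add_div, div_eq_one_iff_eq hpos.ne']
      linarith
    · rw [hcast, smul_diagonal_sub_fin_two_of]
      simp only [Matrix.cons_val_one, Matrix.cons_val_zero, hshift]
      exact (Matrix.posSemidef_fin_two_of_iff (𝕜 := ℂ) ‖c‖ ‖c‖ (-c)).2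
        ⟨by positivity, by rw [norm_neg, sq]⟩
  · rintro s ⟨hs, d, -, hd, hM⟩
    rw [hcast, smul_diagonal_sub_fin_two_of] at hM
    set a := (1 + s) * d 0 - p
    set b := (1 + s) * d 1 - q
    obtain ⟨-, hdet⟩ := (Matrix.posSemidef_fin_two_of_iff (𝕜 := ℂ) a b (-c)).1 hM
    rw [norm_neg] at hdet
    have htrace : a + b = s := by
      rw [Fin.sum_univ_two] at hd
      linear_combination (1 + s) * hd - hpq
    nlinarith [sq_nonneg (a - b), norm_nonneg c]

/-- For a single-qubit state `ρ = ½(𝟙 + v_x σ_x + v_y σ_y + v_z σ_z)`,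
the robustness of coherence with respect to the computational basis equals
`√(v_x² + v_y²) = |ρ₀₁| + |ρ₁₀|`, the `l₁`-norm of the off-diagonal elements. -/
theorem qubit_robustness_eq (vx vy vz : ℝ) (hv : vx ^ 2 + vy ^ 2 + vz ^ 2 ≤ 1)
    (ρ : Matrix (Fin 2) (Fin 2) ℂ)
    (hρ : ρ = (1 / 2 : ℂ) • ((1 : Matrix (Fin 2) (Fin 2) ℂ)
      + (vx : ℂ) • pauliX + (vy : ℂ) • pauliY + (vz : ℂ) • pauliZ)) :
    CRqubit ρ = Real.sqrt (vx ^ 2 + vy ^ 2) ∧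
    Real.sqrt (vx ^ 2 + vy ^ 2) = ‖ρ 0 1‖ + ‖ρ 1 0‖ := by
  set c : ℂ := (vx + -vy * I) / 2
  have hc : ‖c‖ = √(vx ^ 2 + vy ^ 2) / 2 := by
    rw [norm_div, ← ofReal_neg, norm_add_mul_I, neg_sq]; norm_num
  have hρ' : ρ = !![(((1 + vz) / 2 : ℝ) : ℂ), c; star c, (((1 - vz) / 2 : ℝ) : ℂ)] := by
    rw [hρ]; ext i j; fin_cases i <;> fin_cases j <;>
      simp [c, pauliX, pauliY, pauliZ] <;> ring
  obtain ⟨hvz₁, hvz₂⟩ := abs_le.1 (abs_le_one_iff_mul_self_le_one.2 (by nlinarith) : |vz| ≤ 1)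
  refine ⟨?_, ?_⟩
  · rw [hρ', CRqubit_fin_two_of _ _ _ (by ring) (by linarith [norm_nonneg c])
      (by linarith [norm_nonneg c]), hc]
    ring
  · simp [hρ', hc]
end

section
/- A single-qubit channel with Bloch representation v ↦ Λv + κ, where Λ = diag(λ₁,λ₂,λ₃), is completely positive if and only if its Choi matrix ρ_M is positive semidefinite, which (by Descartes's rule of signs applied to the characteristic polynomial) is equivalent to the three inequalities: |κ|² + |λ|² ≤ 3; |κ|² + |λ|² − 2λ₁λ₂λ₃ ≤ 1; and (1−|κ|²)² − 2(1−|κ|²)|λ|² − ½|λ|⁴ + 8λ₁λ₂λ₃ + ½Σᵢ Dᵢ² − 4K·L ≥ 0, where Dᵢ = Σⱼ (−1)^{δᵢⱼ} λⱼ², K = (κ₁²,κ₂²,κ₃²), L = (λ₁²,λ₂²,λ₃²). -/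
open Matrix Complex Kronecker
open scoped ComplexOrder

/-- The single-qubit linear map whose action on Bloch vectors is
`v ↦ Λv + κ` with `Λ = diag(λ₁,λ₂,λ₃)`, extended linearly to all `2×2` matrices:
`M(A) = ½[Tr(A)(𝟙 + κ·σ) + Σᵢ λᵢ Tr(σᵢA) σᵢ]`. -/
noncomputable def blochMap (l1 l2 l3 k1 k2 k3 : ℝ) (A : Matrix (Fin 2) (Fin 2) ℂ) :
    Matrix (Fin 2) (Fin 2) ℂ :=
  (1 / 2 : ℂ) • (A.trace • ((1 : Matrix (Fin 2) (Fin 2) ℂ)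
      + (k1 : ℂ) • pauliX + (k2 : ℂ) • pauliY + (k3 : ℂ) • pauliZ)
    + ((l1 : ℂ) * (pauliX * A).trace) • pauliX
    + ((l2 : ℂ) * (pauliY * A).trace) • pauliY
    + ((l3 : ℂ) * (pauliZ * A).trace) • pauliZ)

/-- Complete positivity of a map on `2×2` matrices: every extension
`id_n ⊗ M` maps positive semidefinite matrices to positive semidefinite ones. -/
def IsCompletelyPositive (M : Matrix (Fin 2) (Fin 2) ℂ → Matrix (Fin 2) (Fin 2) ℂ) : Prop :=
  ∀ (n : ℕ) (ρ : Matrix (Fin n × Fin 2) (Fin n × Fin 2) ℂ), ρ.PosSemidef →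
    (Matrix.of fun (p q : Fin n × Fin 2) =>
      (M (Matrix.of fun k l => ρ (p.1, k) (q.1, l))) p.2 q.2).PosSemidef

/-- The Choi matrix `ρ_M = (𝟙⊗M)(|φ⁺⟩⟨φ⁺|)
= ¼[𝟙⊗(𝟙 + κ·σ) + Σᵢ λᵢ σᵢᵀ⊗σᵢ]` of the Bloch map. -/
noncomputable def choiBloch (l1 l2 l3 k1 k2 k3 : ℝ) :
    Matrix (Fin 2 × Fin 2) (Fin 2 × Fin 2) ℂ :=
  (1 / 4 : ℂ) • ((1 : Matrix (Fin 2) (Fin 2) ℂ) ⊗ₖ ((1 : Matrix (Fin 2) (Fin 2) ℂ)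
      + (k1 : ℂ) • pauliX + (k2 : ℂ) • pauliY + (k3 : ℂ) • pauliZ)
    + (l1 : ℂ) • (pauliXᵀ ⊗ₖ pauliX)
    + (l2 : ℂ) • (pauliYᵀ ⊗ₖ pauliY)
    + (l3 : ℂ) • (pauliZᵀ ⊗ₖ pauliZ))

/-!
Choi's theorem: `M A = ∑ᵢⱼ Aᵢⱼ (2ρ_M)(i·)(j·)`, so `id ⊗ M` sends a state `ρ` to a partial
contraction of `ρ` with `2ρ_M`, which is a Gram matrix when both factors are; conversely `M`
applied to the maximally entangled state returns `ρ_M` itself.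

Spectrum: real numbers are all nonnegative iff their elementary symmetric functions are, since a
negative `x` would be a root of `∏ (t + λᵢ)` at `t = -x > 0`, where every term of the Vieta
expansion is nonnegative and the leading one positive. For the Hermitian matrix `X = 4ρ_M`,
Newton's identities turn `tr X = 4`, `tr X²`, `tr X³` and `det X` into `e₂ = 2(3 - |κ|² - |λ|²)`,
`e₃ = 4(1 - |κ|² - |λ|² + 2λ₁λ₂λ₃)` and `e₄ = det X`, the three quantities of the statement.
-/

theorem Matrix.posSemidef_smul_iff {n : Type*} {c : ℝ} (hc : 0 < c) {A : Matrix n n ℂ} :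
    (c • A).PosSemidef ↔ A.PosSemidef :=
  ⟨fun h => by simpa [smul_smul, hc.ne'] using h.smul (inv_nonneg.2 hc.le), fun h => h.smul hc.le⟩

open scoped MatrixOrder in
theorem Matrix.PosSemidef.partialContract {m n k : Type*} [Fintype m] [Fintype n] [Fintype k]
    [DecidableEq m] [DecidableEq n] [DecidableEq k] {ρ : Matrix (m × n) (m × n) ℂ}
    {C : Matrix (n × k) (n × k) ℂ} (hρ : ρ.PosSemidef) (hC : C.PosSemidef) :
    (Matrix.of fun p q : m × k =>
      ∑ i, ∑ j, ρ (p.1, i) (q.1, j) * C (i, p.2) (j, q.2)).PosSemidef := by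
  obtain ⟨R, rfl⟩ := CStarAlgebra.nonneg_iff_eq_star_mul_self.mp hρ.nonneg
  obtain ⟨S, rfl⟩ := CStarAlgebra.nonneg_iff_eq_star_mul_self.mp hC.nonneg
  let W : Matrix ((m × n) × (n × k)) (m × k) ℂ :=
    Matrix.of fun rs p => ∑ i, R rs.1 (p.1, i) * S rs.2 (i, p.2)
  convert posSemidef_conjTranspose_mul_self W using 1
  ext p q
  simp only [W, of_apply, mul_apply, conjTranspose_apply, star_eq_conjTranspose, star_sum,
    star_mul', Finset.sum_mul_sum]
  rw [Fintype.sum_prod_type]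
  simp_rw [Finset.sum_comm (s := (Finset.univ : Finset n)) (t := (Finset.univ : Finset (m × n))),
    Finset.sum_comm (s := (Finset.univ : Finset n)) (t := (Finset.univ : Finset (n × k)))]
  congr! 4
  ring

theorem Multiset.esymm_nonneg {s : Multiset ℝ} (hs : ∀ x ∈ s, 0 ≤ x) (k : ℕ) : 0 ≤ s.esymm k :=
  sum_nonneg fun _ hp => by
    obtain ⟨t, ht, rfl⟩ := mem_map.1 hp
    exact prod_nonneg fun x hx => hs x (mem_of_le (mem_powersetCard.1 ht).1 hx)

open Polynomial in
theorem Multiset.forall_nonneg_iff_esymm_nonneg (s : Multiset ℝ) :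
    (∀ x ∈ s, 0 ≤ x) ↔ ∀ k ≤ card s, 0 ≤ s.esymm k := by
  refine ⟨fun hs k _ => esymm_nonneg hs k, fun h x hx => ?_⟩
  by_contra! hneg
  have hzero : ((s.map fun r => X + C r).prod).eval (-x) = 0 := by
    rw [eval_multiset_prod]
    exact prod_eq_zero (mem_map.2 ⟨_, mem_map.2 ⟨x, hx, rfl⟩, by simp⟩)
  have hpos : 0 < ((s.map fun r => X + C r).prod).eval (-x) := by
    rw [prod_X_add_C_eq_sum_esymm, eval_finsetSum, Finset.sum_range_succ']
    simp only [eval_mul, eval_C, eval_pow, eval_X]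
    refine add_pos_of_nonneg_of_pos (Finset.sum_nonneg fun j hj => ?_) ?_
    · exact mul_nonneg (h _ (Finset.mem_range.1 hj)) (pow_nonneg (by linarith) _)
    · simpa [esymm] using pow_pos (neg_pos.2 hneg) _
  exact hpos.ne' hzero

theorem nonneg_iff_esymm_nonneg_fin_four (x : Fin 4 → ℝ) :
    0 ≤ x ↔
      0 ≤ x 0 + x 1 + x 2 + x 3 ∧
      0 ≤ x 0 * x 1 + x 0 * x 2 + x 0 * x 3 + x 1 * x 2 + x 1 * x 3 + x 2 * x 3 ∧
      0 ≤ x 0 * x 1 * x 2 + x 0 * x 1 * x 3 + x 0 * x 2 * x 3 + x 1 * x 2 * x 3 ∧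
      0 ≤ x 0 * x 1 * x 2 * x 3 := by
  have hx : 0 ≤ x ↔ 0 ≤ x 0 ∧ 0 ≤ x 1 ∧ 0 ≤ x 2 ∧ 0 ≤ x 3 := by
    simp [Pi.le_def, Fin.forall_fin_succ]
  have h := Multiset.forall_nonneg_iff_esymm_nonneg {x 0, x 1, x 2, x 3}
  simp only [Multiset.insert_eq_cons, Multiset.mem_cons, Multiset.mem_singleton, forall_eq_or_imp,
    forall_eq, Multiset.card_cons, Multiset.card_singleton] at h
  rw [hx, h]
  set s : Multiset ℝ := x 0 ::ₘ x 1 ::ₘ x 2 ::ₘ {x 3}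
  have e0 : s.esymm 0 = 1 := by simp [s, Multiset.esymm]
  have e1 : s.esymm 1 = x 0 + x 1 + x 2 + x 3 := by
    simp [s, Multiset.esymm, Multiset.powersetCard_one]; ring
  have e2 : s.esymm 2 = x 0 * x 1 + x 0 * x 2 + x 0 * x 3 + x 1 * x 2 + x 1 * x 3 + x 2 * x 3 := by
    simp [s, Multiset.esymm, Multiset.powersetCard_one]; ring
  have e3 : s.esymm 3 = x 0 * x 1 * x 2 + x 0 * x 1 * x 3 + x 0 * x 2 * x 3 + x 1 * x 2 * x 3 := by
    simp [s, Multiset.esymm, Multiset.powersetCard_one]; ring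
  have e4 : s.esymm 4 = x 0 * x 1 * x 2 * x 3 := by
    simp [s, Multiset.esymm, Multiset.powersetCard_one]; ring
  refine ⟨fun h => ⟨?_, ?_, ?_, ?_⟩, fun ⟨h1, h2, h3, h4⟩ k hk => ?_⟩
  · simpa [e1] using h 1
  · simpa [e2] using h 2
  · simpa [e3] using h 3
  · simpa [e4] using h 4
  · interval_cases k
    · exact e0 ▸ zero_le_one
    · exact e1 ▸ h1
    · exact e2 ▸ h2
    · exact e3 ▸ h3
    · exact e4 ▸ h4

theorem Matrix.IsHermitian.re_trace_pow {𝕜 n : Type*} [RCLike 𝕜] [Fintype n] [DecidableEq n]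
    {A : Matrix n n 𝕜} (hA : A.IsHermitian) (k : ℕ) :
    RCLike.re (A ^ k).trace = ∑ i, hA.eigenvalues i ^ k := by
  rw [← cfc_pow_id (R := ℝ) A k hA.isSelfAdjoint, hA.cfc_eq, IsHermitian.cfc,
    Unitary.conjStarAlgAut_apply, trace_mul_cycle]
  simp

theorem Matrix.IsHermitian.re_det {𝕜 n : Type*} [RCLike 𝕜] [Fintype n] [DecidableEq n]
    {A : Matrix n n 𝕜} (hA : A.IsHermitian) :
    RCLike.re A.det = ∏ i, hA.eigenvalues i := by
  rw [hA.det_eq_prod_eigenvalues, ← RCLike.ofReal_prod, RCLike.ofReal_re]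

theorem isCompletelyPositive_iff_posSemidef
    {M : Matrix (Fin 2) (Fin 2) ℂ → Matrix (Fin 2) (Fin 2) ℂ}
    {C : Matrix (Fin 2 × Fin 2) (Fin 2 × Fin 2) ℂ}
    (hM : ∀ A a b, M A a b = ∑ i, ∑ j, A i j * C (i, a) (j, b)) :
    IsCompletelyPositive M ↔ C.PosSemidef := by
  refine ⟨fun hCP => ?_, fun hC n ρ hρ => by
    simpa only [hM, of_apply] using hρ.partialContract hC⟩
  -- `φ = |00⟩ + |11⟩`, so `id ⊗ M` maps `φ φ⋆` to `C`
  let φ : Fin 2 × Fin 2 → ℂ := fun p => if p.1 = p.2 then 1 else 0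
  convert hCP 2 _ (posSemidef_vecMulVec_self_star φ) using 1
  ext ⟨p, a⟩ ⟨q, b⟩
  simp [hM, φ, vecMulVec_apply]

theorem blochMap_apply (l1 l2 l3 k1 k2 k3 : ℝ) (A : Matrix (Fin 2) (Fin 2) ℂ) (a b : Fin 2) :
    blochMap l1 l2 l3 k1 k2 k3 A a b
      = ∑ i, ∑ j, A i j * ((2 : ℝ) • choiBloch l1 l2 l3 k1 k2 k3) (i, a) (j, b) := by
  fin_cases a <;> fin_cases b <;>
    simp [blochMap, choiBloch, pauliX, pauliY, pauliZ, trace, Fin.sum_univ_two, vecMul,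
      dotProduct] <;>
    ring_nf <;> simp [Complex.I_sq] <;> ring

theorem isCompletelyPositive_blochMap_iff (l1 l2 l3 k1 k2 k3 : ℝ) :
    IsCompletelyPositive (blochMap l1 l2 l3 k1 k2 k3) ↔
      (choiBloch l1 l2 l3 k1 k2 k3).PosSemidef := by
  rw [isCompletelyPositive_iff_posSemidef (blochMap_apply l1 l2 l3 k1 k2 k3),
    posSemidef_smul_iff two_pos]

/-- `4 ρ_M` in the basis `|00⟩, |01⟩, |10⟩, |11⟩`. -/
noncomputable def choiBlochMatrix (l1 l2 l3 k1 k2 k3 : ℝ) : Matrix (Fin 4) (Fin 4) ℂ :=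
  !![1 + k3 + l3, k1 - I * k2, 0, l1 + l2;
     k1 + I * k2, 1 - k3 - l3, l1 - l2, 0;
     0, l1 - l2, 1 + k3 - l3, k1 - I * k2;
     l1 + l2, 0, k1 + I * k2, 1 - k3 + l3]

section ChoiBlochMatrix

variable (l1 l2 l3 k1 k2 k3 : ℝ)

theorem choiBloch_eq_smul_submatrix :
    choiBloch l1 l2 l3 k1 k2 k3 = (4 : ℝ)⁻¹ •
      (choiBlochMatrix l1 l2 l3 k1 k2 k3).submatrix finProdFinEquiv finProdFinEquiv := by
  ext p q
  fin_cases p <;> fin_cases q <;>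
    simp [choiBloch, choiBlochMatrix, pauliX, pauliY, pauliZ, one_apply, finProdFinEquiv] <;>
    ring

theorem posSemidef_choiBloch_iff :
    (choiBloch l1 l2 l3 k1 k2 k3).PosSemidef ↔
      (choiBlochMatrix l1 l2 l3 k1 k2 k3).PosSemidef := by
  rw [choiBloch_eq_smul_submatrix, posSemidef_smul_iff (by norm_num), posSemidef_submatrix_equiv]

theorem isHermitian_choiBlochMatrix : (choiBlochMatrix l1 l2 l3 k1 k2 k3).IsHermitian := by
  ext i j
  fin_cases i <;> fin_cases j <;> simp [choiBlochMatrix] <;> ring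

theorem trace_choiBlochMatrix : (choiBlochMatrix l1 l2 l3 k1 k2 k3).trace = 4 := by
  simp [trace, Fin.sum_univ_four, choiBlochMatrix]
  ring

theorem trace_choiBlochMatrix_sq : ((choiBlochMatrix l1 l2 l3 k1 k2 k3) ^ 2).trace
    = ((4 * (1 + (k1^2 + k2^2 + k3^2) + (l1^2 + l2^2 + l3^2)) : ℝ) : ℂ) := by
  push_cast
  simp [pow_two, trace, Fin.sum_univ_four, choiBlochMatrix]
  ring_nf
  simp [I_sq]

theorem trace_choiBlochMatrix_cube : ((choiBlochMatrix l1 l2 l3 k1 k2 k3) ^ 3).trace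
    = ((4 * (1 + 3 * (k1^2 + k2^2 + k3^2) + 3 * (l1^2 + l2^2 + l3^2) + 6 * (l1 * l2 * l3)) : ℝ)
      : ℂ) := by
  push_cast
  simp [pow_three, trace, Fin.sum_univ_four, choiBlochMatrix]
  ring_nf
  simp [I_sq]

theorem det_choiBlochMatrix : (choiBlochMatrix l1 l2 l3 k1 k2 k3).det
    = (((1 - (k1 ^ 2 + k2 ^ 2 + k3 ^ 2)) ^ 2
         - 2 * (1 - (k1 ^ 2 + k2 ^ 2 + k3 ^ 2)) * (l1 ^ 2 + l2 ^ 2 + l3 ^ 2)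
         - (1 / 2) * (l1 ^ 2 + l2 ^ 2 + l3 ^ 2) ^ 2
         + 8 * l1 * l2 * l3
         + (1 / 2) * ((-l1 ^ 2 + l2 ^ 2 + l3 ^ 2) ^ 2 + (l1 ^ 2 - l2 ^ 2 + l3 ^ 2) ^ 2
             + (l1 ^ 2 + l2 ^ 2 - l3 ^ 2) ^ 2)
         - 4 * (k1 ^ 2 * l1 ^ 2 + k2 ^ 2 * l2 ^ 2 + k3 ^ 2 * l3 ^ 2) : ℝ) : ℂ) := by
  push_cast
  simp [det_succ_row_zero, Fin.sum_univ_succ, choiBlochMatrix, Fin.succAbove, Fin.castSucc,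
    Fin.castAdd, Fin.castLE]
  ring_nf
  simp [I_sq]
  ring

theorem posSemidef_choiBlochMatrix_iff :
    (choiBlochMatrix l1 l2 l3 k1 k2 k3).PosSemidef ↔
      (k1 ^ 2 + k2 ^ 2 + k3 ^ 2) + (l1 ^ 2 + l2 ^ 2 + l3 ^ 2) ≤ 3 ∧
      (k1 ^ 2 + k2 ^ 2 + k3 ^ 2) + (l1 ^ 2 + l2 ^ 2 + l3 ^ 2) - 2 * l1 * l2 * l3 ≤ 1 ∧
      0 ≤ (choiBlochMatrix l1 l2 l3 k1 k2 k3).det.re := by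
  have hX := isHermitian_choiBlochMatrix l1 l2 l3 k1 k2 k3
  set e := hX.eigenvalues
  have p1 := hX.re_trace_pow 1
  have p2 := hX.re_trace_pow 2
  have p3 := hX.re_trace_pow 3
  have p4 := hX.re_det
  rw [pow_one, trace_choiBlochMatrix] at p1
  rw [trace_choiBlochMatrix_sq] at p2
  rw [trace_choiBlochMatrix_cube] at p3
  simp only [Fin.sum_univ_four, Fin.prod_univ_four, pow_one, RCLike.re_to_complex,
    Complex.ofReal_re, Complex.re_ofNat] at p1 p2 p3 p4
  have e2 : e 0 * e 1 + e 0 * e 2 + e 0 * e 3 + e 1 * e 2 + e 1 * e 3 + e 2 * e 3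
      = 2 * (3 - (k1 ^ 2 + k2 ^ 2 + k3 ^ 2) - (l1 ^ 2 + l2 ^ 2 + l3 ^ 2)) := by
    linear_combination (-(e 0 + e 1 + e 2 + e 3 + 4) / 2) * p1 + (1 / 2) * p2
  have e3 : e 0 * e 1 * e 2 + e 0 * e 1 * e 3 + e 0 * e 2 * e 3 + e 1 * e 2 * e 3
      = 4 * (1 - (k1 ^ 2 + k2 ^ 2 + k3 ^ 2) - (l1 ^ 2 + l2 ^ 2 + l3 ^ 2) + 2 * l1 * l2 * l3) := by
    linear_combination (-((e 0 + e 1 + e 2 + e 3) ^ 2 + 4 * (e 0 + e 1 + e 2 + e 3) + 16) / 6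
      + 2 * (1 + (k1 ^ 2 + k2 ^ 2 + k3 ^ 2) + (l1 ^ 2 + l2 ^ 2 + l3 ^ 2))) * p1
      + ((e 0 + e 1 + e 2 + e 3) / 2) * p2 - (1 / 3) * p3
  rw [hX.posSemidef_iff_eigenvalues_nonneg, nonneg_iff_esymm_nonneg_fin_four, ← p1, e2, e3, p4]
  constructor
  · rintro ⟨-, h2, h3, h4⟩
    exact ⟨by linarith, by linarith, h4⟩
  · rintro ⟨h2, h3, h4⟩
    exact ⟨by norm_num, by linarith, by linarith, h4⟩

end ChoiBlochMatrix

/-- A single-qubit channel with Bloch representation `v ↦ Λv + κ`,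
`Λ = diag(λ₁,λ₂,λ₃)`, is completely positive iff its Choi matrix is positive
semidefinite, which is equivalent to the three inequalities
`|κ|² + |λ|² ≤ 3`, `|κ|² + |λ|² − 2λ₁λ₂λ₃ ≤ 1` and
`(1−|κ|²)² − 2(1−|κ|²)|λ|² − ½|λ|⁴ + 8λ₁λ₂λ₃ + ½ΣᵢDᵢ² − 4K·L ≥ 0`. -/
theorem bloch_cp_iff_choi_psd_iff_ineqs (l1 l2 l3 k1 k2 k3 : ℝ) :
    (IsCompletelyPositive (blochMap l1 l2 l3 k1 k2 k3) ↔
      (choiBloch l1 l2 l3 k1 k2 k3).PosSemidef) ∧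
    ((choiBloch l1 l2 l3 k1 k2 k3).PosSemidef ↔
      ((k1 ^ 2 + k2 ^ 2 + k3 ^ 2) + (l1 ^ 2 + l2 ^ 2 + l3 ^ 2) ≤ 3 ∧
       (k1 ^ 2 + k2 ^ 2 + k3 ^ 2) + (l1 ^ 2 + l2 ^ 2 + l3 ^ 2) - 2 * l1 * l2 * l3 ≤ 1 ∧
       (1 - (k1 ^ 2 + k2 ^ 2 + k3 ^ 2)) ^ 2
         - 2 * (1 - (k1 ^ 2 + k2 ^ 2 + k3 ^ 2)) * (l1 ^ 2 + l2 ^ 2 + l3 ^ 2)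
         - (1 / 2) * (l1 ^ 2 + l2 ^ 2 + l3 ^ 2) ^ 2
         + 8 * l1 * l2 * l3
         + (1 / 2) * ((-l1 ^ 2 + l2 ^ 2 + l3 ^ 2) ^ 2 + (l1 ^ 2 - l2 ^ 2 + l3 ^ 2) ^ 2
             + (l1 ^ 2 + l2 ^ 2 - l3 ^ 2) ^ 2)
         - 4 * (k1 ^ 2 * l1 ^ 2 + k2 ^ 2 * l2 ^ 2 + k3 ^ 2 * l3 ^ 2) ≥ 0)) := by
  refine ⟨isCompletelyPositive_blochMap_iff l1 l2 l3 k1 k2 k3, ?_⟩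
  rw [posSemidef_choiBloch_iff, posSemidef_choiBlochMatrix_iff, det_choiBlochMatrix,
    Complex.ofReal_re, ge_iff_le]
end
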